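/- Let μ be the measure on ℝ² given by μ = (1/2)·(Exp(1) ⊗ Exp(3)) + (1/2)·T, where Exp(λ) denotes the exponential distribution with rate λ (density λe^{−λx} on [0,∞)), Exp(1) ⊗ Exp(3) is the product measure, and T is the pushforward of Exp(2) under the map y ↦ (y, y). Then for every x¹, x² ∈ ℝ, n·μ( ((log n)/2 + x¹, ∞) × ((log n)/2 + x², ∞) ) → (1/2)·e^{−2·max(x¹, x²)} as n → ∞. -/

import Mathlib

open MeasureTheory Filter Set
open scoped ENNReal

/-- The exponential distribution with rate `r`: density `r * exp (-(r * x))` on `[0, ∞)`. -/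
noncomputable def expMeas (r : ℝ) : Measure ℝ :=
  volume.withDensity fun x => ENNReal.ofReal (if 0 ≤ x then r * Real.exp (-(r * x)) else 0)

/-- The mixture measure of Example 3.7:
`μ = (1/2)·(Exp(1) ⊗ Exp(3)) + (1/2)·(pushforward of Exp(2) under y ↦ (y,y))`. -/
noncomputable def mixMeas : Measure (ℝ × ℝ) :=
  (1/2 : ℝ≥0∞) • (expMeas 1).prod (expMeas 3) +
    (1/2 : ℝ≥0∞) • (expMeas 2).map (fun y => (y, y))


/-! Once `log n / 2 + min x1 x2 ≥ 0`, the exponential tails give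
`μ(rectangle) = (e^{-(x1 + 3 x2)} / n² + e^{-2 max(x1, x2)} / n) / 2`: the diagonal component
has tail `e^{-2 t}`, so it contributes at order `1/n`, while the independent component has tail
`e^{-4 t}` and vanishes after multiplication by `n`. -/

open ProbabilityTheory Real

lemma expMeas_eq_expMeasure (r : ℝ) : expMeas r = expMeasure r := by
  rw [expMeas, expMeasure, gammaMeasure]
  congr 1
  ext x
  rw [← exponentialPDF_eq]
  rfl

instance (r : ℝ) : SFinite (expMeas r) := by
  rw [expMeas]
  infer_instance

lemma expMeas_Ioi {r t : ℝ} (hr : 0 < r) (ht : 0 ≤ t) :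
    expMeas r (Ioi t) = ENNReal.ofReal (exp (-(r * t))) := by
  have : IsProbabilityMeasure (expMeas r) := by
    rw [expMeas_eq_expMeasure]
    exact isProbabilityMeasure_expMeasure hr
  have hIic : expMeas r (Iic t) = ENNReal.ofReal (1 - exp (-(r * t))) := by
    rw [expMeas_eq_expMeasure, expMeasure, gammaMeasure, withDensity_apply _ measurableSet_Iic]
    exact (lintegral_exponentialPDF_eq_antiDeriv hr t).trans (by rw [if_pos ht])
  have hexp_le : exp (-(r * t)) ≤ 1 := exp_le_one_iff.2 (neg_nonpos.2 (mul_nonneg hr.le ht))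
  rw [← compl_Iic, prob_compl_eq_one_sub measurableSet_Iic, hIic, ← ENNReal.ofReal_one,
    ← ENNReal.ofReal_sub _ (sub_nonneg.2 hexp_le), sub_sub_cancel]

lemma mixMeas_Ioi_prod_Ioi {a b : ℝ} (ha : 0 ≤ a) (hb : 0 ≤ b) :
    (mixMeas (Ioi a ×ˢ Ioi b)).toReal = (exp (-(a + 3 * b)) + exp (-(2 * max a b))) / 2 := by
  have hdiag : (fun y : ℝ => (y, y)) ⁻¹' (Ioi a ×ˢ Ioi b) = Ioi (max a b) := by
    ext y
    simp
  rw [mixMeas, Measure.add_apply, Measure.smul_apply, Measure.smul_apply, Measure.prod_prod,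
    Measure.map_apply (by fun_prop) (measurableSet_Ioi.prod measurableSet_Ioi), hdiag,
    expMeas_Ioi one_pos ha, expMeas_Ioi three_pos hb,
    expMeas_Ioi two_pos (ha.trans (le_max_left a b)),
    ← ENNReal.ofReal_mul (exp_nonneg _), smul_eq_mul, smul_eq_mul,
    ENNReal.toReal_add (by finiteness) (by finiteness), ENNReal.toReal_mul, ENNReal.toReal_mul,
    ENNReal.toReal_ofReal (by positivity), ENNReal.toReal_ofReal (exp_nonneg _),
    neg_add, exp_add]
  norm_num
  ring

lemma exp_neg_log_add {x : ℝ} (hx : 0 < x) (c : ℝ) : exp (-(log x + c)) = exp (-c) / x := by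
  rw [neg_add, exp_add, exp_neg, exp_log hx, inv_mul_eq_div]

lemma natCast_mul_mixMeas_Ioi_prod_Ioi {n : ℕ} (hn : 0 < n) {x₁ x₂ : ℝ}
    (h₁ : 0 ≤ log n / 2 + x₁) (h₂ : 0 ≤ log n / 2 + x₂) :
    n * (mixMeas (Ioi (log n / 2 + x₁) ×ˢ Ioi (log n / 2 + x₂))).toReal
      = exp (-(x₁ + 3 * x₂)) / 2 * (n : ℝ)⁻¹ + exp (-(2 * max x₁ x₂)) / 2 := by
  have hn' : (0 : ℝ) < n := Nat.cast_pos.2 hn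
  have hsum :
      log n / 2 + x₁ + 3 * (log n / 2 + x₂) = log ((n : ℝ) ^ 2) + (x₁ + 3 * x₂) := by
    rw [log_pow, Nat.cast_ofNat]
    ring
  have hmax : 2 * max (log n / 2 + x₁) (log n / 2 + x₂) = log n + 2 * max x₁ x₂ := by
    rw [max_add_add_left]
    ring
  rw [mixMeas_Ioi_prod_Ioi h₁ h₂, hsum, hmax, exp_neg_log_add (by positivity),
    exp_neg_log_add hn']
  field_simp

theorem mixture_exp_hda_medium_cone_upper_rectangle :
    ∀ x1 x2 : ℝ,
      Tendsto (fun n : ℕ =>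
          (n : ℝ) * (mixMeas
            (Ioi (Real.log n / 2 + x1) ×ˢ Ioi (Real.log n / 2 + x2))).toReal)
        atTop (nhds ((1/2) * Real.exp (-(2 * max x1 x2)))) := by
  intro x1 x2
  have hlog : Tendsto (fun n : ℕ => log n / 2) atTop atTop :=
    (tendsto_log_atTop.comp tendsto_natCast_atTop_atTop).atTop_div_const two_pos
  have hlim : Tendsto (fun n : ℕ =>
      exp (-(x1 + 3 * x2)) / 2 * (n : ℝ)⁻¹ + exp (-(2 * max x1 x2)) / 2)
      atTop (nhds ((1/2) * exp (-(2 * max x1 x2)))) := by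
    have hinv := tendsto_inv_atTop_zero.comp (tendsto_natCast_atTop_atTop (R := ℝ))
    simpa [div_eq_inv_mul] using
      (hinv.const_mul (exp (-(x1 + 3 * x2)) / 2)).add_const (exp (-(2 * max x1 x2)) / 2)
  refine hlim.congr' ?_
  filter_upwards [eventually_gt_atTop 0,
    (tendsto_atTop_add_const_right _ x1 hlog).eventually_ge_atTop 0,
    (tendsto_atTop_add_const_right _ x2 hlog).eventually_ge_atTop 0] with n hn h₁ h₂
  exact (natCast_mul_mixMeas_Ioi_prod_Ioi hn h₁ h₂).symm
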